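/- arXiv:1201.1926 — 2 statements merged into one kernel-verified Lean document; each statement's English description precedes it below -/
import Mathlib

section
/- Let f be a transcendental entire function, let R0 > 0 be such that M(r, f) > r for all r ≥ R0, and let ε : [R0, ∞) → (0, 1) be a nonincreasing function such that ε(M^n(r, f)) ≥ ε(r)^{n+1} for all r ≥ R0 and all n ≥ 1. Then ε(r)·r → ∞ as r → ∞. -/
/-- The maximum modulus function `M(r, f) = max_{|z| = r} |f z|`. -/
noncomputable def maxMod (f : ℂ → ℂ) (r : ℝ) : ℝ :=
  sSup ((fun z => ‖f z‖) '' Metric.sphere (0 : ℂ) r)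

/-- `f` is a transcendental entire function: differentiable on all of `ℂ`
and not (the evaluation of) a polynomial. -/
def EntireTranscendental (f : ℂ → ℂ) : Prop :=
  Differentiable ℂ f ∧ ¬∃ p : Polynomial ℂ, ∀ z, f z = p.eval z

/-!
If `f` is entire and `‖f‖ ≤ C r ^ n` on arbitrarily large circles `|z| = r`, Cauchy's estimates
kill every Taylor coefficient of order `> n`, so `f` is a polynomial. Hence a transcendental `f`
has `M(r, f) ≥ r ^ 2` for large `r`, and the orbit `s n = M^n(a, f)` satisfies `s n ≥ a ^ 2 ^ n`.
For `s j ≤ x < s (j + 1)` the monotonicity of `ε` gives `ε x * x ≥ ε(a) ^ (j + 2) * 2 ^ 2 ^ j`,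
and the doubly exponential factor beats the geometric one.
-/

open Filter Metric Topology Polynomial Set
open scoped Nat

theorem Differentiable.iteratedDeriv_eq_zero_of_frequently_norm_le {F : Type*}
    [NormedAddCommGroup F] [NormedSpace ℂ F] [CompleteSpace F] {f : ℂ → F}
    (hf : Differentiable ℂ f) {c : ℂ} {C : ℝ} {n k : ℕ} (hnk : n < k)
    (hbound : ∃ᶠ r in atTop, ∀ z ∈ sphere c r, ‖f z‖ ≤ C * r ^ n) :
    iteratedDeriv k f c = 0 := by
  have hcauchy : ∃ᶠ r in atTop, ‖iteratedDeriv k f c‖ ≤ k ! * C * (r ^ (k - n))⁻¹ := by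
    refine (hbound.and_eventually (eventually_gt_atTop 0)).mono fun r ⟨hr, hr0⟩ => ?_
    have hpow : r ^ k = r ^ n * r ^ (k - n) := by rw [← pow_add, Nat.add_sub_cancel' hnk.le]
    calc ‖iteratedDeriv k f c‖ ≤ k ! * (C * r ^ n) / r ^ k :=
          Complex.norm_iteratedDeriv_le_of_forall_mem_sphere_norm_le k hr0 hf.diffContOnCl hr
      _ = k ! * C * (r ^ (k - n))⁻¹ := by field_simp; rw [hpow]; ring
  have hlim : Tendsto (fun r : ℝ => k ! * C * (r ^ (k - n))⁻¹) atTop (𝓝 0) := by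
    simpa using (tendsto_inv_atTop_zero.comp
      (tendsto_pow_atTop (by omega : k - n ≠ 0))).const_mul ((k ! : ℝ) * C)
  exact norm_le_zero_iff.mp (ge_of_tendsto_of_frequently hlim hcauchy)

theorem Differentiable.exists_polynomial_of_frequently_norm_le {f : ℂ → ℂ}
    (hf : Differentiable ℂ f) {C : ℝ} {n : ℕ}
    (hbound : ∃ᶠ r in atTop, ∀ z ∈ sphere (0 : ℂ) r, ‖f z‖ ≤ C * r ^ n) :
    ∃ p : ℂ[X], ∀ z, f z = p.eval z := by
  refine ⟨∑ k ∈ Finset.range (n + 1), Polynomial.C ((k ! : ℂ)⁻¹ * iteratedDeriv k f 0) * X ^ k,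
    fun z => ?_⟩
  rw [← Complex.taylorSeries_eq_of_entire' 0 z hf, tsum_eq_sum (s := Finset.range (n + 1))
    fun k hk => by rw [hf.iteratedDeriv_eq_zero_of_frequently_norm_le (by simpa using hk) hbound,
      mul_zero, zero_mul]]
  simp [Polynomial.eval_finsetSum]

theorem norm_le_maxMod {f : ℂ → ℂ} (hf : Continuous f) (z : ℂ) : ‖f z‖ ≤ maxMod f ‖z‖ :=
  le_csSup ((isCompact_sphere 0 ‖z‖).bddAbove_image (continuous_norm.comp hf).continuousOn)
    ⟨z, by simp, rfl⟩

theorem EntireTranscendental.eventually_pow_le_maxMod {f : ℂ → ℂ} (hf : EntireTranscendental f)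
    (n : ℕ) : ∀ᶠ r in atTop, r ^ n ≤ maxMod f r := by
  by_contra h
  refine hf.2 (hf.1.exists_polynomial_of_frequently_norm_le (C := 1) (n := n) ?_)
  refine (not_eventually.mp h).mono fun r hr z hz => ?_
  rw [mem_sphere_zero_iff_norm] at hz
  calc ‖f z‖ ≤ maxMod f r := hz ▸ norm_le_maxMod hf.1.continuous z
    _ ≤ 1 * r ^ n := by rw [one_mul]; exact (not_le.mp hr).le

theorem pow_two_pow_le_iterate {M : ℝ → ℝ} {a : ℝ} (ha : 1 ≤ a) (hM : ∀ r ≥ a, r ^ 2 ≤ M r)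
    (n : ℕ) : a ^ 2 ^ n ≤ M^[n] a := by
  induction n with
  | zero => simp
  | succ n ih =>
    rw [Function.iterate_succ_apply', pow_succ, pow_mul]
    calc (a ^ 2 ^ n) ^ 2 ≤ (M^[n] a) ^ 2 := by gcongr
      _ ≤ M (M^[n] a) := hM _ ((le_self_pow₀ ha (by positivity)).trans ih)

theorem tendsto_pow_mul_two_pow_two_pow {c : ℝ} (hc : 0 < c) :
    Tendsto (fun n : ℕ => c ^ n * 2 ^ 2 ^ n) atTop atTop := by
  have htwo : Tendsto (fun n : ℕ => (2 : ℝ) ^ 2 ^ n) atTop atTop :=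
    (tendsto_pow_atTop_atTop_of_one_lt one_lt_two).comp
      (tendsto_pow_atTop_atTop_of_one_lt one_lt_two)
  obtain ⟨N, hN⟩ := eventually_atTop.mp (htwo.eventually_ge_atTop (2 / c))
  refine (tendsto_add_atTop_iff_nat N).mp (tendsto_atTop_of_geom_le (by positivity) one_lt_two
    fun n => ?_)
  have hratio : 2 ≤ c * 2 ^ 2 ^ (n + N) := by
    have := hN (n + N) (Nat.le_add_left N n)
    rwa [div_le_iff₀ hc, mul_comm] at this
  calc 2 * (c ^ (n + N) * 2 ^ 2 ^ (n + N))
      ≤ c * 2 ^ 2 ^ (n + N) * (c ^ (n + N) * 2 ^ 2 ^ (n + N)) := by gcongr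
    _ = c ^ (n + 1 + N) * 2 ^ 2 ^ (n + 1 + N) := by
      rw [show n + 1 + N = n + N + 1 by omega, pow_succ 2 (n + N), pow_mul]; ring

theorem exists_le_lt_succ_of_tendsto_atTop {α : Type*} [LinearOrder α] [NoMaxOrder α]
    {s : ℕ → α} (hs : Tendsto s atTop atTop) {N : ℕ} {x : α} (hx : s N ≤ x) :
    ∃ j ≥ N, s j ≤ x ∧ x < s (j + 1) := by
  by_contra! hstep
  have hle : ∀ j ≥ N, s j ≤ x := fun j hj => Nat.le_induction hx hstep j hj
  obtain ⟨j, hj, hxj⟩ := ((eventually_ge_atTop N).and (hs.eventually_gt_atTop x)).exists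
  exact (hle j hj).not_gt hxj

theorem AntitoneOn.tendsto_mul_atTop_of_pow_le_along {ε : ℝ → ℝ} {s : ℕ → ℝ} {a c : ℝ}
    (hε : AntitoneOn ε (Ici a)) (hc : 0 < c) (ha : ∀ n, a ≤ s n)
    (hs : ∀ n, (2 : ℝ) ^ 2 ^ n ≤ s n) (hεs : ∀ n, c ^ (n + 2) ≤ ε (s (n + 1))) :
    Tendsto (fun x => ε x * x) atTop atTop := by
  have hlower : Tendsto (fun n : ℕ => c ^ (n + 2) * 2 ^ 2 ^ n) atTop atTop := by
    simpa [pow_add, mul_comm, mul_left_comm, mul_assoc] using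
      (tendsto_pow_mul_two_pow_two_pow hc).const_mul_atTop (pow_pos hc 2)
  have hs_tendsto : Tendsto s atTop atTop :=
    tendsto_atTop_mono hs ((tendsto_pow_atTop_atTop_of_one_lt one_lt_two).comp
      (tendsto_pow_atTop_atTop_of_one_lt one_lt_two))
  refine tendsto_atTop_atTop.mpr fun C => ?_
  obtain ⟨N, hN⟩ := eventually_atTop.mp (hlower.eventually_ge_atTop C)
  refine ⟨s N, fun x hx => ?_⟩
  obtain ⟨j, hj, hjx, hxj⟩ := exists_le_lt_succ_of_tendsto_atTop hs_tendsto hx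
  have hεx : c ^ (j + 2) ≤ ε x :=
    (hεs j).trans (hε ((ha j).trans hjx) (ha (j + 1)) hxj.le)
  calc C ≤ c ^ (j + 2) * 2 ^ 2 ^ j := hN j hj
    _ ≤ ε x * x := by gcongr; exacts [(pow_pos hc _).le.trans hεx, (hs j).trans hjx]

theorem simply_connected_fast_escaping_stmt1_general
    (f : ℂ → ℂ) (hf : EntireTranscendental f)
    (R0 : ℝ)
    (ε : ℝ → ℝ)
    (hε01 : ∀ r ≥ R0, ε r ∈ Set.Ioo (0 : ℝ) 1)
    (hεmono : ∀ r s, R0 ≤ r → r ≤ s → ε s ≤ ε r)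
    (hεM : ∀ r ≥ R0, ∀ n : ℕ, 1 ≤ n → ε r ^ (n + 1) ≤ ε ((maxMod f)^[n] r)) :
    Filter.Tendsto (fun r => ε r * r) Filter.atTop Filter.atTop := by
  obtain ⟨R, hR⟩ := eventually_atTop.mp (hf.eventually_pow_le_maxMod 2)
  set a := max R0 (max 2 R)
  have haR0 : R0 ≤ a := le_max_left _ _
  have ha2 : 2 ≤ a := (le_max_left _ _).trans (le_max_right _ _)
  have horbit (n : ℕ) : a ^ 2 ^ n ≤ (maxMod f)^[n] a :=
    pow_two_pow_le_iterate (by linarith) (fun r hr =>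
      hR r (((le_max_right _ _).trans (le_max_right _ _)).trans hr)) n
  refine AntitoneOn.tendsto_mul_atTop_of_pow_le_along
    (fun x hx y _ hxy => hεmono x y (haR0.trans hx) hxy) (hε01 a haR0).1
    (fun n => (le_self_pow₀ (by linarith) (by positivity)).trans (horbit n))
    (fun n => (pow_le_pow_left₀ zero_le_two ha2 _).trans (horbit n))
    (fun n => hεM a haR0 (n + 1) (Nat.le_add_left 1 n))

theorem simply_connected_fast_escaping_stmt1
    (f : ℂ → ℂ) (hf : EntireTranscendental f)
    (R0 : ℝ) (hR0 : 0 < R0) (hM : ∀ r ≥ R0, r < maxMod f r)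
    (ε : ℝ → ℝ)
    (hε01 : ∀ r ≥ R0, ε r ∈ Set.Ioo (0 : ℝ) 1)
    (hεmono : ∀ r s, R0 ≤ r → r ≤ s → ε s ≤ ε r)
    (hεM : ∀ r ≥ R0, ∀ n : ℕ, 1 ≤ n → ε r ^ (n + 1) ≤ ε ((maxMod f)^[n] r)) :
    Filter.Tendsto (fun r => ε r * r) Filter.atTop Filter.atTop :=
  simply_connected_fast_escaping_stmt1_general f hf R0 ε hε01 hεmono hεM
end

section
/- With the sequences (α_n) and (β_n) defined as in the context (for any fixed even integer N0 ≥ 4), there exists N ∈ ℕ such that for all n ≥ N one has μ_n² < β_n < μ_n^{n−3}, where μ_n = n^{3/n}. -/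
/-- `μ_n = n^{3/n}`. -/
noncomputable def muSeq (n : ℕ) : ℝ := (n : ℝ) ^ ((3 : ℝ) / n)

/-- `σ_n = Σ_{l=1}^{n-2} μ_n^l`. -/
noncomputable def sigmaSeq (n : ℕ) : ℝ := ∑ l ∈ Finset.Icc 1 (n - 2), muSeq n ^ l

/-!
For large `n` both `μ_n² ≤ n` and `n² ≤ μ_n^{n-3}` hold, so it suffices to place `β_n`
strictly between `n` and `n²`. Summing the geometric series and using `μ_n - 1 ≥ log μ_n ≥ 2/n`
gives `0 ≤ σ_n ≤ n⁴/2`, so the numerator of `β_n` lies in `[n⁴/4, n⁴]`, while `α_n` lies in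
`[3n²/2, 2n²]`; hence `n²/8 ≤ β_n ≤ 2n²/3`.
-/

lemma muSeq_pow (n k : ℕ) : muSeq n ^ k = (n : ℝ) ^ (3 * k / n : ℝ) := by
  rw [muSeq, ← Real.rpow_natCast, ← Real.rpow_mul (Nat.cast_nonneg n)]
  ring_nf

lemma muSeq_pow_le_pow {n k m : ℕ} (hn : 1 ≤ n) (h : 3 * k ≤ m * n) :
    muSeq n ^ k ≤ (n : ℝ) ^ m := by
  have hn' : (0 : ℝ) < n := by exact_mod_cast hn
  rw [muSeq_pow, ← Real.rpow_natCast (n : ℝ) m]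
  refine Real.rpow_le_rpow_of_exponent_le (by exact_mod_cast hn) ?_
  rw [div_le_iff₀ hn']
  exact_mod_cast h

lemma pow_le_muSeq_pow {n k m : ℕ} (hn : 1 ≤ n) (h : m * n ≤ 3 * k) :
    (n : ℝ) ^ m ≤ muSeq n ^ k := by
  have hn' : (0 : ℝ) < n := by exact_mod_cast hn
  rw [muSeq_pow, ← Real.rpow_natCast (n : ℝ) m]
  refine Real.rpow_le_rpow_of_exponent_le (by exact_mod_cast hn) ?_
  rw [le_div_iff₀ hn']
  exact_mod_cast h

lemma one_lt_muSeq {n : ℕ} (hn : 2 ≤ n) : 1 < muSeq n := by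
  have hn' : (1 : ℝ) < n := by exact_mod_cast hn
  exact Real.one_lt_rpow hn' (by positivity)

lemma two_div_le_muSeq_sub_one {n : ℕ} (hn : 2 ≤ n) : 2 / (n : ℝ) ≤ muSeq n - 1 := by
  have hn' : (2 : ℝ) ≤ n := by exact_mod_cast hn
  have hlog_mu : Real.log (muSeq n) = 3 / n * Real.log n := Real.log_rpow (by linarith) _
  have hlog_n : 2 / 3 ≤ Real.log n := by
    linarith [Real.log_le_log two_pos hn', Real.log_two_gt_d9]
  have hmu : Real.log (muSeq n) + 1 ≤ muSeq n := by
    simpa [Real.exp_log (by linarith [one_lt_muSeq hn] : 0 < muSeq n)]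
      using Real.add_one_le_exp (Real.log (muSeq n))
  have : 2 / (n : ℝ) ≤ 3 / n * Real.log n := by
    rw [div_mul_eq_mul_div]
    gcongr
    linarith
  linarith

lemma sigmaSeq_nonneg (n : ℕ) : 0 ≤ sigmaSeq n :=
  Finset.sum_nonneg fun _ _ => pow_nonneg (Real.rpow_nonneg (Nat.cast_nonneg n) _) _

lemma sigmaSeq_eq_geom_sum {n : ℕ} (hn : 2 ≤ n) :
    sigmaSeq n = (muSeq n ^ (n - 1) - muSeq n) / (muSeq n - 1) := by
  have hIcc : Finset.Icc 1 (n - 2) = Finset.Ico 1 (n - 1) := by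
    rw [show n - 1 = n - 2 + 1 by omega, Finset.Ico_add_one_right_eq_Icc]
  rw [sigmaSeq, hIcc, geom_sum_Ico (one_lt_muSeq hn).ne' (by omega), pow_one]

lemma sigmaSeq_le {n : ℕ} (hn : 2 ≤ n) : sigmaSeq n ≤ (n : ℝ) ^ 4 / 2 := by
  have hmu := one_lt_muSeq hn
  have hn' : (0 : ℝ) < 2 / n := by positivity
  calc sigmaSeq n = (muSeq n ^ (n - 1) - muSeq n) / (muSeq n - 1) := sigmaSeq_eq_geom_sum hn
    _ ≤ (n : ℝ) ^ 3 / (2 / n) := by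
        refine div_le_div₀ (by positivity) ?_ hn' (two_div_le_muSeq_sub_one hn)
        have : muSeq n ^ (n - 1) ≤ (n : ℝ) ^ 3 := muSeq_pow_le_pow (by omega) (by omega)
        linarith
    _ = (n : ℝ) ^ 4 / 2 := by field_simp

lemma muSeq_sq_lt_and_lt_muSeq_pow {n : ℕ} (hn : 9 ≤ n) {x : ℝ}
    (hx₁ : (n : ℝ) < x) (hx₂ : x < (n : ℝ) ^ 2) :
    muSeq n ^ 2 < x ∧ x < muSeq n ^ (n - 3) := by
  have hsq : muSeq n ^ 2 ≤ (n : ℝ) ^ 1 := muSeq_pow_le_pow (by omega) (by omega)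
  have hpow : (n : ℝ) ^ 2 ≤ muSeq n ^ (n - 3) := pow_le_muSeq_pow (by omega) (by omega)
  exact ⟨by linarith [pow_one (n : ℝ)], by linarith⟩

lemma lt_div_and_div_lt_sq {x p q : ℝ} (hx : 8 < x)
    (hp₁ : x ^ 4 / 4 ≤ p) (hp₂ : p ≤ x ^ 4) (hq₁ : 3 * x ^ 2 / 2 ≤ q) (hq₂ : q ≤ 2 * x ^ 2) :
    x < p / q ∧ p / q < x ^ 2 := by
  have hq : 0 < q := by nlinarith
  constructor
  · have hxq : x * q ≤ 2 * x ^ 3 := by nlinarith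
    rw [lt_div_iff₀ hq]
    nlinarith [pow_pos (by linarith : (0 : ℝ) < x) 3]
  · rw [div_lt_iff₀ hq]
    nlinarith

theorem simply_connected_fast_escaping_stmt8_general
    (N0 : ℕ)
    (α : ℕ → ℕ) (β : ℕ → ℝ)
    (hα3 : ∀ n, N0 < n → Even n → 2 * α n = 3 * n ^ 2 + n + 6)
    (hα4 : ∀ n, N0 < n → Odd n → 2 * α n = 3 * n ^ 2 + n + 4)
    (hβ2 : ∀ n, N0 ≤ n → Even n → β n = ((n : ℝ) ^ 4 - sigmaSeq n) / (α n : ℝ))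
    (hβ3 : ∀ n, N0 ≤ n → Odd n →
      β n = ((n : ℝ) ^ 3 * (2 * (n : ℝ) - 1) / 2 - sigmaSeq n) / (α n : ℝ)) :
    ∃ N : ℕ, ∀ n, N ≤ n → muSeq n ^ 2 < β n ∧ β n < muSeq n ^ (n - 3) := by
  refine ⟨N0 + 9, fun n hn => ?_⟩
  have hn' : (9 : ℝ) ≤ n := by exact_mod_cast (by omega : 9 ≤ n)
  have hσ₀ := sigmaSeq_nonneg n
  have hσ := sigmaSeq_le (n := n) (by omega)
  suffices (n : ℝ) < β n ∧ β n < (n : ℝ) ^ 2 from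
    muSeq_sq_lt_and_lt_muSeq_pow (by omega) this.1 this.2
  rcases Nat.even_or_odd n with he | ho
  · have hα : (2 : ℝ) * α n = 3 * n ^ 2 + n + 6 := by exact_mod_cast hα3 n (by omega) he
    rw [hβ2 n (by omega) he]
    exact lt_div_and_div_lt_sq (by linarith) (by nlinarith) (by nlinarith) (by nlinarith)
      (by nlinarith)
  · have hα : (2 : ℝ) * α n = 3 * n ^ 2 + n + 4 := by exact_mod_cast hα4 n (by omega) ho
    rw [hβ3 n (by omega) ho]
    exact lt_div_and_div_lt_sq (by linarith) (by nlinarith) (by nlinarith) (by nlinarith)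
      (by nlinarith)

theorem simply_connected_fast_escaping_stmt8
    (N0 : ℕ) (hN0even : Even N0) (hN0 : 4 ≤ N0)
    (α : ℕ → ℕ) (β : ℕ → ℝ)
    (hα1 : ∀ n < N0, α n = 0)
    (hα2 : 2 * α N0 = N0 ^ 3 + 2 * N0 ^ 2 + 6 * N0 + 2)
    (hα3 : ∀ n, N0 < n → Even n → 2 * α n = 3 * n ^ 2 + n + 6)
    (hα4 : ∀ n, N0 < n → Odd n → 2 * α n = 3 * n ^ 2 + n + 4)
    (hβ1 : ∀ n < N0, β n = 0)
    (hβ2 : ∀ n, N0 ≤ n → Even n → β n = ((n : ℝ) ^ 4 - sigmaSeq n) / (α n : ℝ))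
    (hβ3 : ∀ n, N0 ≤ n → Odd n →
      β n = ((n : ℝ) ^ 3 * (2 * (n : ℝ) - 1) / 2 - sigmaSeq n) / (α n : ℝ)) :
    ∃ N : ℕ, ∀ n, N ≤ n → muSeq n ^ 2 < β n ∧ β n < muSeq n ^ (n - 3) :=
  simply_connected_fast_escaping_stmt8_general N0 α β hα3 hα4 hβ2 hβ3
end
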